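/- arXiv:2601.13047 — 3 statements merged into one kernel-verified Lean document; each statement's English description precedes it below -/
import Mathlib

section
/- Let n ≥ 3 and let α : Fin n → ℕ be an assignment of agents to n nodes. Define S_i = {v : α(v) = i} and let L be the largest index with S_L ≠ ∅. If |S_0| ≥ 2 and S_i ≠ ∅ for every i ∈ [1, L] (i.e., there is no 'gap'), then the total number of agents satisfies ∑_v α(v) ≤ (n-2)(n-1)/2. -/
/-!
Count the sum by levels: `∑ v, α v = ∑_{j < L} #{v | j < α v}`. Since the levels `1, …, j` are
all occupied and level `0` holds at least two nodes, at least `j + 2` nodes have `α v ≤ j`, so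
level `j` contributes at most `n - 2 - j`; taking `j = L` also gives `L ≤ n - 2`. Hence the sum
is at most `(n - 2) + (n - 3) + ⋯ + 1 = (n - 2)(n - 1)/2`.
-/

open Finset

theorem Finset.sum_eq_sum_range_card_lt {ι : Type*} (s : Finset ι) (f : ι → ℕ) {L : ℕ}
    (hf : ∀ v ∈ s, f v ≤ L) : ∑ v ∈ s, f v = ∑ j ∈ range L, #{v ∈ s | j < f v} := by
  calc ∑ v ∈ s, f v = ∑ v ∈ s, #{j ∈ range L | j < f v} := by
        refine sum_congr rfl fun v hv => ?_
        have : {j ∈ range L | j < f v} = range (f v) := by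
          ext j; have := hf v hv; simp only [mem_filter, mem_range]; omega
        rw [this, card_range]
    _ = _ := by simp only [card_filter]; exact sum_comm

theorem sum_range_tsub (m : ℕ) : ∑ j ∈ range m, (m - j) = (m + 1) * m / 2 := by
  have := sum_range_reflect (fun j => j) (m + 1)
  simp only [add_tsub_cancel_right] at this
  rw [sum_range_succ, Nat.sub_self, add_zero] at this
  rw [this, sum_range_id, Nat.add_sub_cancel]

theorem add_le_card_filter_le {ι : Type*} [Fintype ι] (α : ι → ℕ) {k j : ℕ}
    (h0 : k ≤ #{v | α v = 0}) (hcover : ∀ i, 1 ≤ i → i ≤ j → ∃ v, α v = i) :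
    k + j ≤ #{v | α v ≤ j} := by
  have hzero : #{v | α v = 0} = #{v | α v ≤ j ∧ α v = 0} := by
    congr 1; ext v; simp only [mem_filter, mem_univ, true_and]; omega
  have hnonzero : j ≤ #{v | α v ≤ j ∧ ¬α v = 0} := calc
    j = #(Icc 1 j) := by rw [Nat.card_Icc, Nat.add_sub_cancel]
    _ ≤ _ := card_le_card_of_surjOn α fun i hi => by
      obtain ⟨hi1, hij⟩ := mem_Icc.1 hi
      obtain ⟨v, rfl⟩ := hcover i hi1 hij
      exact ⟨v, by simp only [coe_filter, mem_univ, true_and, Set.mem_ofPred_eq]; omega, rfl⟩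
  rw [← card_filter_add_card_filter_not (fun v => α v = 0)]
  simp only [filter_filter]
  omega

theorem card_filter_lt_add_le_card {ι : Type*} [Fintype ι] (α : ι → ℕ) {k j : ℕ}
    (h0 : k ≤ #{v | α v = 0}) (hcover : ∀ i, 1 ≤ i → i ≤ j → ∃ v, α v = i) :
    #{v | j < α v} + (k + j) ≤ Fintype.card ι := by
  have := add_le_card_filter_le α h0 hcover
  have hsplit := card_filter_add_card_filter_not (s := univ) (fun v => j < α v)
  simp only [not_lt, card_univ] at hsplit
  omega

theorem stmt_5_general (n : ℕ) (α : Fin n → ℕ) (L : ℕ)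
    (hLmax : ∀ v, α v ≤ L)
    (hS0 : 2 ≤ (Finset.univ.filter (fun v => α v = 0)).card)
    (hnogap : ∀ i, 1 ≤ i → i ≤ L → ∃ v, α v = i) :
    ∑ v, α v ≤ (n - 2) * (n - 1) / 2 := by
  have hcover : ∀ j ≤ L, ∀ i, 1 ≤ i → i ≤ j → ∃ v, α v = i :=
    fun j hj i hi hij => hnogap i hi (hij.trans hj)
  have hL : 2 + L ≤ n := by
    simpa using (add_le_card_filter_le α hS0 hnogap).trans (card_le_univ _)
  calc ∑ v, α v = ∑ j ∈ range L, #{v | j < α v} :=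
        sum_eq_sum_range_card_lt _ _ fun v _ => hLmax v
    _ ≤ ∑ j ∈ range L, (n - 2 - j) := sum_le_sum fun j hj => by
        have := card_filter_lt_add_le_card α hS0 (hcover j (mem_range.1 hj).le)
        rw [Fintype.card_fin] at this
        omega
    _ ≤ ∑ j ∈ range (n - 2), (n - 2 - j) := sum_le_sum_of_subset (range_subset_range.2 (by omega))
    _ = (n - 2) * (n - 1) / 2 := by
        rw [sum_range_tsub, Nat.mul_comm]; congr 2; omega

open Finset in
/-- Core counting argument of Lemma 5: with at least two empty nodes and no gap in
the occupied levels `1, …, L`, the total number of agents is at most `(n-2)(n-1)/2`. -/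
theorem stmt_5 (n : ℕ) (hn : 3 ≤ n) (α : Fin n → ℕ) (L : ℕ)
    (hLmem : ∃ v, α v = L) (hLmax : ∀ v, α v ≤ L)
    (hS0 : 2 ≤ (Finset.univ.filter (fun v => α v = 0)).card)
    (hnogap : ∀ i, 1 ≤ i → i ≤ L → ∃ v, α v = i) :
    ∑ v, α v ≤ (n - 2) * (n - 1) / 2 :=
  stmt_5_general n α L hLmax hS0 hnogap
end

section
/- Let n ≥ 3 and let α : Fin n → ℕ with ∑_v α(v) = (n-2)(n-1)/2 + 1. Define S_i = {v : α(v) = i}. If |S_0| ≥ 2, then there exist indices i and j with j ≥ i + 2 such that S_i ≠ ∅, S_j ≠ ∅, and S_k = ∅ for all k with i < k < j. -/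
/-!
If there were no gap of width at least 2, the occupied levels would be the whole interval
`[0, M]` with `M = max α`. Counting `M - α v` over the empty node `z` and, among the other nodes,
one node per level `0, …, M` (possible since a second node is empty) gives
`∑ (M - α v) ≥ M + M(M+1)/2`, i.e. `2 ∑ α ≤ 2Mn - M(M+3)`. With `m = n - 2` this is at most
`m(m+1)`, because `(m - M)(m - M + 1) ≥ 0`; so the total is smaller than `m(m+1)/2 + 1`.
-/

open Finset

theorem Nat.ordConnected_of_forall_exists_between {s : Set ℕ}
    (h : ∀ i j, i + 2 ≤ j → i ∈ s → j ∈ s → ∃ k, i < k ∧ k < j ∧ k ∈ s) : s.OrdConnected := by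
  have pred_mem : ∀ d i j, j - i = d → i ∈ s → j ∈ s → i < j → j - 1 ∈ s := by
    intro d
    induction d using Nat.strong_induction_on with
    | _ d ih =>
      intro i j hd hi hj hij
      by_cases hij' : i + 2 ≤ j
      · obtain ⟨k, hik, hkj, hk⟩ := h i j hij' hi hj
        exact ih (j - k) (by omega) k j rfl hk hj hkj
      · rwa [show j - 1 = i by omega]
  refine ⟨fun x hx y hy => ?_⟩
  have hdown : ∀ d, d ≤ y - x → y - d ∈ s := by
    intro d
    induction d with
    | zero => exact fun _ => hy
    | succ d ih =>
      intro hd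
      have hlt : x < y - d := by omega
      simpa [Nat.sub_sub] using pred_mem _ x (y - d) rfl hx (ih (by omega)) hlt
  intro z ⟨hxz, hzy⟩
  simpa [Nat.sub_sub_self hzy] using hdown (y - z) (by omega)

theorem two_mul_sum_add_le_of_Icc_subset_range {ι : Type*} [Fintype ι] {α : ι → ℕ} {M : ℕ}
    (hle : ∀ v, α v ≤ M) (hocc : Set.Icc 0 M ⊆ Set.range α) {z z' : ι} (hzz' : z ≠ z')
    (hz : α z = 0) (hz' : α z' = 0) :
    2 * ∑ v, α v + M * (M + 3) ≤ 2 * M * Fintype.card ι := by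
  classical
  have hcomplement : ∑ v, α v + ∑ v, (M - α v) = Fintype.card ι * M := by
    rw [← sum_add_distrib, sum_congr rfl fun v _ => Nat.add_sub_cancel' (hle v), sum_const,
      card_univ, smul_eq_mul]
  have hreflect : (∑ i ∈ range (M + 1), (M - i)) * 2 = (M + 1) * M := by
    have := sum_range_reflect (fun i => i) (M + 1)
    rw [Nat.add_sub_cancel] at this
    rw [this, sum_range_id_mul_two, Nat.add_sub_cancel]
  have hrange : range (M + 1) ⊆ (univ.erase z).image α := by
    intro i hi
    obtain ⟨v, rfl⟩ := hocc ⟨Nat.zero_le i, Nat.lt_succ_iff.mp (mem_range.mp hi)⟩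
    by_cases hvz : v = z
    · exact mem_image.mpr ⟨z', mem_erase.mpr ⟨hzz'.symm, mem_univ _⟩, by rw [hz', hvz, hz]⟩
    · exact mem_image_of_mem α (mem_erase.mpr ⟨hvz, mem_univ _⟩)
  have hlower : M + ∑ i ∈ range (M + 1), (M - i) ≤ ∑ v, (M - α v) := by
    rw [← add_sum_erase _ _ (mem_univ z), hz, Nat.sub_zero]
    gcongr
    calc ∑ i ∈ range (M + 1), (M - i) ≤ ∑ i ∈ (univ.erase z).image α, (M - i) :=
          sum_le_sum_of_subset hrange
      _ ≤ ∑ v ∈ univ.erase z, (M - α v) := sum_image_le_of_nonneg fun _ _ => Nat.zero_le _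
  linarith

theorem stmt_6_general (n : ℕ) (α : Fin n → ℕ)
    (htotal : ∑ v, α v = (n - 2) * (n - 1) / 2 + 1)
    (hS0 : 2 ≤ (Finset.univ.filter (fun v => α v = 0)).card) :
    ∃ i j : ℕ, i + 2 ≤ j ∧ (∃ v, α v = i) ∧ (∃ v, α v = j) ∧
      ∀ k, i < k → k < j → ¬∃ v, α v = k := by
  by_contra! hgap
  obtain ⟨z, hz, z', hz', hzz'⟩ := one_lt_card.mp hS0
  rw [mem_filter] at hz hz'
  have : Nonempty (Fin n) := ⟨z⟩
  obtain ⟨w, hw⟩ := Finite.exists_max α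
  have hocc : Set.Icc 0 (α w) ⊆ Set.range α :=
    (Nat.ordConnected_of_forall_exists_between hgap).out ⟨z, hz.2⟩ ⟨w, rfl⟩
  have hbound := two_mul_sum_add_le_of_Icc_subset_range hw hocc hzz' hz.2 hz'.2
  obtain ⟨m, rfl⟩ : ∃ m, n = m + 2 := ⟨n - 2, by omega⟩
  have hquad : 2 * α w * (m + 2) ≤ m * (m + 1) + α w * (α w + 3) := by
    rcases le_total (α w) m with h | h
    · obtain ⟨a, ha⟩ := Nat.exists_eq_add_of_le h; rw [ha]; nlinarith
    · obtain ⟨a, ha⟩ := Nat.exists_eq_add_of_le h; rw [ha]; nlinarith [Nat.le_mul_self a]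
  have hhalf := Nat.div_mul_cancel (Nat.even_mul_succ_self m).two_dvd
  rw [htotal, Fintype.card_fin, Nat.add_sub_cancel, show m + 2 - 1 = m + 1 by omega] at hbound
  omega

/-- Lemma 5 (lm:Condition): with `(n-2)(n-1)/2 + 1` agents on `n` nodes and at least
two empty nodes, the set of occupied agent-count levels contains a gap of size ≥ 2. -/
theorem stmt_6 (n : ℕ) (hn : 3 ≤ n) (α : Fin n → ℕ)
    (htotal : ∑ v, α v = (n - 2) * (n - 1) / 2 + 1)
    (hS0 : 2 ≤ (Finset.univ.filter (fun v => α v = 0)).card) :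
    ∃ i j : ℕ, i + 2 ≤ j ∧ (∃ v, α v = i) ∧ (∃ v, α v = j) ∧
      ∀ k, i < k → k < j → ¬∃ v, α v = k :=
  stmt_6_general n α htotal hS0
end

section
/- Let n ≥ 7 and 6 ≤ p ≤ n - 1. Consider the two port-labelled trees G_1 and G_2 on vertex set {w_1, …, w_n} defined as follows. In G_1: path w_1 ∼ w_{n-p+1} ∼ w_{n-p+2} ∼ … ∼ w_n, with each w_i for 2 ≤ i ≤ n-p attached as a leaf to w_{n-p+1}. In G_2: path w_1 ∼ w_{n-2} ∼ w_{n-3} ∼ … ∼ w_{n-p+2} ∼ w_{n-p+1} ∼ w_{n-1} ∼ w_n, with each w_i for 2 ≤ i ≤ n-p attached as a leaf to w_{n-p+1}. Then both G_1 and G_2 are connected with diameter exactly p, and the subgraphs induced by S* = {w_{n-p+1}, …, w_{n-2}} are isomorphic (both being the star centered at w_{n-p+1} joined to the path w_{n-p+2} ∼ … ∼ w_{n-2}). -/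
/-!
Both trees are caterpillars: a path of length `p` (`w_1, w_{n-p+1}, …, w_n` in `G₁`, and
`w_1, w_{n-2}, w_{n-3}, …, w_{n-p+1}, w_{n-1}, w_n` in `G₂`) with the remaining vertices attached as
leaves to an inner vertex of that path. Going through the path, any two vertices are at distance at
most `p`; conversely, the projection onto the path is 1-Lipschitz along edges, so the two ends of
the path are at distance exactly `p`. On `S*` both trees induce the path
`w_{n-p+1} ∼ ⋯ ∼ w_{n-2}`.
-/

namespace SimpleGraph

variable {V : Type*} {G : SimpleGraph V}

theorem Walk.apply_le_apply_add_length {f : V → ℕ} (hf : ∀ u v, G.Adj u v → f u ≤ f v + 1)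
    {u v : V} (w : G.Walk u v) : f u ≤ f v + w.length := by
  induction w with
  | nil => simp
  | cons h _ ih => have := hf _ _ h; rw [Walk.length_cons]; omega

theorem exists_walk_length_eq_sub {γ : ℕ → V} {i j : ℕ}
    (hγ : ∀ k, i ≤ k → k < j → G.Adj (γ k) (γ (k + 1))) (hij : i ≤ j) :
    ∃ w : G.Walk (γ i) (γ j), w.length = j - i := by
  induction j, hij using Nat.le_induction with
  | base => exact ⟨.nil, by simp⟩
  | succ j hij ih =>
    obtain ⟨w, hw⟩ := ih fun k hik hkj => hγ k hik (by omega)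
    exact ⟨w.concat (hγ j hij (by omega)), by rw [Walk.length_concat, hw]; omega⟩

/-- A path `γ 0 ∼ γ 1 ∼ ⋯ ∼ γ p` of `G` off which every other vertex `v` hangs as a leaf at an
inner vertex `γ (pos v)`, where the projection `pos` changes by at most one along each edge. -/
structure IsCaterpillarSpine (G : SimpleGraph V) (p : ℕ) (γ : ℕ → V) (pos : V → ℕ) : Prop where
  adj_succ : ∀ i < p, G.Adj (γ i) (γ (i + 1))
  pos_spine : ∀ i ≤ p, pos (γ i) = i
  pos_le : ∀ v, pos v ≤ p
  pos_le_pos_add_one : ∀ u v, G.Adj u v → pos u ≤ pos v + 1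
  eq_or_adj : ∀ v, v = γ (pos v) ∨ G.Adj v (γ (pos v)) ∧ 0 < pos v ∧ pos v < p

namespace IsCaterpillarSpine

variable {p : ℕ} {γ : ℕ → V} {pos : V → ℕ}

theorem exists_walk_spine (h : G.IsCaterpillarSpine p γ pos) {i j : ℕ} (hij : i ≤ j)
    (hj : j ≤ p) : ∃ w : G.Walk (γ i) (γ j), w.length = j - i :=
  exists_walk_length_eq_sub (fun k _ hk => h.adj_succ k (by omega)) hij

theorem exists_walk_to_spine (h : G.IsCaterpillarSpine p γ pos) (v : V) :
    ∃ w : G.Walk v (γ (pos v)), w.length = 0 ∨ w.length = 1 ∧ 0 < pos v ∧ pos v < p := by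
  rcases h.eq_or_adj v with hv | ⟨hadj, hpos⟩
  · exact ⟨Walk.nil.copy rfl hv, .inl (by simp)⟩
  · exact ⟨hadj.toWalk, .inr ⟨rfl, hpos⟩⟩

theorem edist_le (h : G.IsCaterpillarSpine p γ pos) (u v : V) : G.edist u v ≤ p := by
  wlog huv : pos u ≤ pos v generalizing u v
  · rw [edist_comm]; exact this v u (by omega)
  obtain ⟨wu, hwu⟩ := h.exists_walk_to_spine u
  obtain ⟨wv, hwv⟩ := h.exists_walk_to_spine v
  obtain ⟨ws, hws⟩ := h.exists_walk_spine huv (h.pos_le v)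
  calc G.edist u v ≤ (wu.append (ws.append wv.reverse)).length := SimpleGraph.edist_le _
    _ ≤ p := by
      simp only [Walk.length_append, Walk.length_reverse, Nat.cast_le]
      have := h.pos_le v
      omega

theorem edist_spine_ends (h : G.IsCaterpillarSpine p γ pos) : G.edist (γ 0) (γ p) = p := by
  refine le_antisymm (h.edist_le _ _) ?_
  obtain ⟨ws, -⟩ := h.exists_walk_spine (Nat.zero_le p) le_rfl
  obtain ⟨w, hw⟩ := ws.reachable.symm.exists_walk_length_eq_edist
  have := w.apply_le_apply_add_length h.pos_le_pos_add_one
  rw [h.pos_spine p le_rfl, h.pos_spine 0 (Nat.zero_le p), zero_add] at this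
  rw [edist_comm, ← hw]
  exact_mod_cast this

theorem ediam_eq (h : G.IsCaterpillarSpine p γ pos) : G.ediam = p :=
  le_antisymm (ediam_le_of_edist_le h.edist_le) (h.edist_spine_ends ▸ edist_le_ediam)

theorem connected (h : G.IsCaterpillarSpine p γ pos) : G.Connected :=
  have : Nonempty V := ⟨γ 0⟩
  connected_of_ediam_ne_top (by simp [h.ediam_eq])

theorem diam_eq (h : G.IsCaterpillarSpine p γ pos) : G.diam = p := by
  rw [diam, h.ediam_eq, ENat.toNat_natCast]

end IsCaterpillarSpine

end SimpleGraph

open SimpleGraph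

theorem exists_and_and_eq_pair_iff {α : Type*} (P Q : α → Prop) (f : α → α) (a b : α) :
    (∃ i, P i ∧ Q i ∧ ((a = i ∧ b = f i) ∨ (b = i ∧ a = f i))) ↔
      (P a ∧ Q a ∧ b = f a) ∨ (P b ∧ Q b ∧ a = f b) := by
  constructor
  · rintro ⟨i, hP, hQ, ⟨rfl, rfl⟩ | ⟨rfl, rfl⟩⟩
    exacts [.inl ⟨hP, hQ, rfl⟩, .inr ⟨hP, hQ, rfl⟩]
  · rintro (⟨hP, hQ, rfl⟩ | ⟨hP, hQ, rfl⟩)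
    exacts [⟨a, hP, hQ, .inl ⟨rfl, rfl⟩⟩, ⟨b, hP, hQ, .inr ⟨rfl, rfl⟩⟩]

-- The vertex `w_i` of the paper is `i - 1 : Fin n`.
def IsG₁ (n p : ℕ) (G : SimpleGraph (Fin n)) : Prop :=
  ∀ a b : Fin n, G.Adj a b ↔ a ≠ b ∧
    (((a : ℕ) = 0 ∧ (b : ℕ) = n - p) ∨ ((b : ℕ) = 0 ∧ (a : ℕ) = n - p) ∨
     (∃ i, n - p ≤ i ∧ i ≤ n - 2 ∧
       (((a : ℕ) = i ∧ (b : ℕ) = i + 1) ∨ ((b : ℕ) = i ∧ (a : ℕ) = i + 1))) ∨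
     (∃ i, 1 ≤ i ∧ i ≤ n - p - 1 ∧
       (((a : ℕ) = i ∧ (b : ℕ) = n - p) ∨ ((b : ℕ) = i ∧ (a : ℕ) = n - p))))

def IsG₂ (n p : ℕ) (G : SimpleGraph (Fin n)) : Prop :=
  ∀ a b : Fin n, G.Adj a b ↔ a ≠ b ∧
    (((a : ℕ) = 0 ∧ (b : ℕ) = n - 3) ∨ ((b : ℕ) = 0 ∧ (a : ℕ) = n - 3) ∨
     (∃ i, n - p ≤ i ∧ i ≤ n - 4 ∧
       (((a : ℕ) = i ∧ (b : ℕ) = i + 1) ∨ ((b : ℕ) = i ∧ (a : ℕ) = i + 1))) ∨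
     ((a : ℕ) = n - p ∧ (b : ℕ) = n - 2) ∨ ((b : ℕ) = n - p ∧ (a : ℕ) = n - 2) ∨
     ((a : ℕ) = n - 2 ∧ (b : ℕ) = n - 1) ∨ ((b : ℕ) = n - 2 ∧ (a : ℕ) = n - 1) ∨
     (∃ i, 1 ≤ i ∧ i ≤ n - p - 1 ∧
       (((a : ℕ) = i ∧ (b : ℕ) = n - p) ∨ ((b : ℕ) = i ∧ (a : ℕ) = n - p))))

def spine₁ (n p : ℕ) [NeZero n] (i : ℕ) : Fin n :=
  ⟨min (if i = 0 then 0 else n - p + i - 1) (n - 1), by have := NeZero.pos n; omega⟩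

theorem val_spine₁ {n p i : ℕ} [NeZero n] (hpn : p ≤ n - 1) (hi : i ≤ p) :
    (spine₁ n p i : ℕ) = if i = 0 then 0 else n - p + i - 1 := by
  simp only [spine₁]
  split_ifs <;> omega

def proj₁ (n p : ℕ) (v : Fin n) : ℕ :=
  if (v : ℕ) = 0 then 0 else if (v : ℕ) < n - p then 1 else v + 1 - (n - p)

def spine₂ (n p : ℕ) [NeZero n] (i : ℕ) : Fin n :=
  ⟨min (if i = 0 then 0 else if i + 2 ≤ p then n - 2 - i else n - p + i - 1) (n - 1),
    by have := NeZero.pos n; omega⟩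

theorem val_spine₂ {n p i : ℕ} [NeZero n] (hpn : p ≤ n - 1) (hi : i ≤ p) :
    (spine₂ n p i : ℕ) = if i = 0 then 0 else if i + 2 ≤ p then n - 2 - i else n - p + i - 1 := by
  simp only [spine₂]
  split_ifs <;> omega

def proj₂ (n p : ℕ) (v : Fin n) : ℕ :=
  if (v : ℕ) = 0 then 0
  else if (v : ℕ) < n - p then p - 2
  else if (v : ℕ) ≤ n - 3 then n - 2 - v
  else v + 1 - (n - p)

theorem IsG₁.isCaterpillarSpine {n p : ℕ} [NeZero n] {G : SimpleGraph (Fin n)} (hp : 2 ≤ p)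
    (hpn : p ≤ n - 1) (hG : IsG₁ n p G) : G.IsCaterpillarSpine p (spine₁ n p) (proj₁ n p) := by
  simp only [IsG₁, exists_and_and_eq_pair_iff, ne_eq, Fin.ext_iff] at hG
  have proj_le (v : Fin n) : proj₁ n p v ≤ p := by
    simp only [proj₁]
    split_ifs <;> omega
  refine ⟨?_, ?_, proj_le, ?_, ?_⟩
  · intro i hi
    rw [hG, val_spine₁ hpn hi.le, val_spine₁ hpn hi, if_neg i.succ_ne_zero]
    split_ifs
    · exact ⟨by omega, .inl ⟨rfl, by omega⟩⟩
    · exact ⟨by omega, .inr (.inr (.inl (.inl ⟨by omega, by omega, by omega⟩)))⟩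
  · intro i hi
    rw [proj₁, val_spine₁ hpn hi]
    split_ifs <;> omega
  · intro u v h
    rw [hG] at h
    simp only [proj₁]
    split_ifs <;> omega
  · intro v
    by_cases hleaf : 1 ≤ (v : ℕ) ∧ (v : ℕ) < n - p
    · have hv : proj₁ n p v = 1 := by simp only [proj₁]; split_ifs <;> omega
      rw [hv, hG, val_spine₁ hpn (by omega), if_neg one_ne_zero]
      exact .inr ⟨⟨by omega, .inr (.inr (.inr (.inl ⟨hleaf.1, by omega, by omega⟩)))⟩,
        by omega, by omega⟩
    · left
      rw [Fin.ext_iff, val_spine₁ hpn (proj_le v), proj₁]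
      split_ifs <;> omega

theorem IsG₂.isCaterpillarSpine {n p : ℕ} [NeZero n] {G : SimpleGraph (Fin n)} (hp : 3 ≤ p)
    (hpn : p ≤ n - 1) (hG : IsG₂ n p G) : G.IsCaterpillarSpine p (spine₂ n p) (proj₂ n p) := by
  simp only [IsG₂, exists_and_and_eq_pair_iff, ne_eq, Fin.ext_iff] at hG
  have adj_of (a b : Fin n) (h : ((a : ℕ) = 0 ∧ (b : ℕ) = n - 3) ∨
      (n - p ≤ (b : ℕ) ∧ (b : ℕ) ≤ n - 4 ∧ (a : ℕ) = b + 1) ∨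
      ((a : ℕ) = n - p ∧ (b : ℕ) = n - 2) ∨ ((a : ℕ) = n - 2 ∧ (b : ℕ) = n - 1)) :
      G.Adj a b := by
    rw [hG]
    rcases h with h | h | h | h
    · exact ⟨by omega, .inl h⟩
    · exact ⟨by omega, .inr (.inr (.inl (.inr h)))⟩
    · exact ⟨by omega, .inr (.inr (.inr (.inl h)))⟩
    · exact ⟨by omega, .inr (.inr (.inr (.inr (.inr (.inl h)))))⟩
  have proj_le (v : Fin n) : proj₂ n p v ≤ p := by
    simp only [proj₂]
    split_ifs <;> omega
  refine ⟨?_, ?_, proj_le, ?_, ?_⟩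
  · intro i hi
    apply adj_of
    rw [val_spine₂ hpn hi.le, val_spine₂ hpn hi, if_neg i.succ_ne_zero]
    split_ifs <;> omega
  · intro i hi
    rw [proj₂, val_spine₂ hpn hi]
    split_ifs <;> omega
  · intro u v h
    rw [hG] at h
    simp only [proj₂]
    split_ifs <;> omega
  · intro v
    by_cases hleaf : 1 ≤ (v : ℕ) ∧ (v : ℕ) < n - p
    · have hv : proj₂ n p v = p - 2 := by simp only [proj₂]; split_ifs <;> omega
      rw [hv, hG, val_spine₂ hpn (by omega), if_neg (by omega), if_pos (by omega)]
      exact .inr ⟨⟨by omega, .inr (.inr (.inr (.inr (.inr (.inr (.inr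
        (.inl ⟨by omega, by omega, by omega⟩)))))))⟩, by omega, by omega⟩
    · left
      rw [Fin.ext_iff, val_spine₂ hpn (proj_le v), proj₂]
      split_ifs <;> omega

theorem IsG₁.adj_iff_of_mem {n p : ℕ} {G : SimpleGraph (Fin n)} (hG : IsG₁ n p G) {a b : Fin n}
    (ha : n - p ≤ (a : ℕ) ∧ (a : ℕ) ≤ n - 3) (hb : n - p ≤ (b : ℕ) ∧ (b : ℕ) ≤ n - 3) :
    G.Adj a b ↔ (a : ℕ) + 1 = b ∨ (b : ℕ) + 1 = a := by
  simp only [IsG₁, exists_and_and_eq_pair_iff, ne_eq, Fin.ext_iff] at hG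
  rw [hG]
  constructor
  · intro h
    omega
  · rintro (h | h)
    · exact ⟨by omega, .inr (.inr (.inl (.inl ⟨ha.1, by omega, h.symm⟩)))⟩
    · exact ⟨by omega, .inr (.inr (.inl (.inr ⟨hb.1, by omega, h.symm⟩)))⟩

theorem IsG₂.adj_iff_of_mem {n p : ℕ} {G : SimpleGraph (Fin n)} (hpn : p ≤ n - 1)
    (hG : IsG₂ n p G) {a b : Fin n}
    (ha : n - p ≤ (a : ℕ) ∧ (a : ℕ) ≤ n - 3) (hb : n - p ≤ (b : ℕ) ∧ (b : ℕ) ≤ n - 3) :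
    G.Adj a b ↔ (a : ℕ) + 1 = b ∨ (b : ℕ) + 1 = a := by
  simp only [IsG₂, exists_and_and_eq_pair_iff, ne_eq, Fin.ext_iff] at hG
  rw [hG]
  constructor
  · intro h
    omega
  · rintro (h | h)
    · exact ⟨by omega, .inr (.inr (.inl (.inl ⟨ha.1, by omega, h.symm⟩)))⟩
    · exact ⟨by omega, .inr (.inr (.inl (.inr ⟨hb.1, by omega, h.symm⟩)))⟩

theorem stmt_16_general (n p : ℕ) (hp : 6 ≤ p) (hpn : p ≤ n - 1)
    (G1 G2 : SimpleGraph (Fin n))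
    (hG1 : ∀ a b : Fin n, G1.Adj a b ↔ a ≠ b ∧
      (((a : ℕ) = 0 ∧ (b : ℕ) = n - p) ∨ ((b : ℕ) = 0 ∧ (a : ℕ) = n - p) ∨
       (∃ i, n - p ≤ i ∧ i ≤ n - 2 ∧
         (((a : ℕ) = i ∧ (b : ℕ) = i + 1) ∨ ((b : ℕ) = i ∧ (a : ℕ) = i + 1))) ∨
       (∃ i, 1 ≤ i ∧ i ≤ n - p - 1 ∧
         (((a : ℕ) = i ∧ (b : ℕ) = n - p) ∨ ((b : ℕ) = i ∧ (a : ℕ) = n - p)))))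
    (hG2 : ∀ a b : Fin n, G2.Adj a b ↔ a ≠ b ∧
      (((a : ℕ) = 0 ∧ (b : ℕ) = n - 3) ∨ ((b : ℕ) = 0 ∧ (a : ℕ) = n - 3) ∨
       (∃ i, n - p ≤ i ∧ i ≤ n - 4 ∧
         (((a : ℕ) = i ∧ (b : ℕ) = i + 1) ∨ ((b : ℕ) = i ∧ (a : ℕ) = i + 1))) ∨
       ((a : ℕ) = n - p ∧ (b : ℕ) = n - 2) ∨ ((b : ℕ) = n - p ∧ (a : ℕ) = n - 2) ∨
       ((a : ℕ) = n - 2 ∧ (b : ℕ) = n - 1) ∨ ((b : ℕ) = n - 2 ∧ (a : ℕ) = n - 1) ∨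
       (∃ i, 1 ≤ i ∧ i ≤ n - p - 1 ∧
         (((a : ℕ) = i ∧ (b : ℕ) = n - p) ∨ ((b : ℕ) = i ∧ (a : ℕ) = n - p))))) :
    G1.Connected ∧ G2.Connected ∧ G1.diam = p ∧ G2.diam = p ∧
    Nonempty
      (G1.induce {v : Fin n | n - p ≤ (v : ℕ) ∧ (v : ℕ) ≤ n - 3} ≃g
       G2.induce {v : Fin n | n - p ≤ (v : ℕ) ∧ (v : ℕ) ≤ n - 3}) := by
  have : NeZero n := ⟨by omega⟩
  have h₁ := IsG₁.isCaterpillarSpine (by omega) hpn hG1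
  have h₂ := IsG₂.isCaterpillarSpine (by omega) hpn hG2
  have hS : G1.induce {v : Fin n | n - p ≤ (v : ℕ) ∧ (v : ℕ) ≤ n - 3} =
      G2.induce {v : Fin n | n - p ≤ (v : ℕ) ∧ (v : ℕ) ≤ n - 3} := by
    ext a b
    exact (IsG₁.adj_iff_of_mem hG1 a.2 b.2).trans (IsG₂.adj_iff_of_mem hpn hG2 a.2 b.2).symm
  exact ⟨h₁.connected, h₂.connected, h₁.diam_eq, h₂.diam_eq, hS ▸ ⟨Iso.refl⟩⟩

/-- Graph-theoretic core of Theorem 5: the two adversarial trees `G₁` and `G₂` on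
`{w_1, …, w_n}` (node `w_i` represented by `i - 1 : Fin n`) are connected, have
diameter exactly `p`, and induce isomorphic subgraphs on
`S* = {w_{n-p+1}, …, w_{n-2}}`. -/
theorem stmt_16 (n p : ℕ) (hn : 7 ≤ n) (hp : 6 ≤ p) (hpn : p ≤ n - 1)
    (G1 G2 : SimpleGraph (Fin n))
    (hG1 : ∀ a b : Fin n, G1.Adj a b ↔ a ≠ b ∧
      (((a : ℕ) = 0 ∧ (b : ℕ) = n - p) ∨ ((b : ℕ) = 0 ∧ (a : ℕ) = n - p) ∨
       (∃ i, n - p ≤ i ∧ i ≤ n - 2 ∧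
         (((a : ℕ) = i ∧ (b : ℕ) = i + 1) ∨ ((b : ℕ) = i ∧ (a : ℕ) = i + 1))) ∨
       (∃ i, 1 ≤ i ∧ i ≤ n - p - 1 ∧
         (((a : ℕ) = i ∧ (b : ℕ) = n - p) ∨ ((b : ℕ) = i ∧ (a : ℕ) = n - p)))))
    (hG2 : ∀ a b : Fin n, G2.Adj a b ↔ a ≠ b ∧
      (((a : ℕ) = 0 ∧ (b : ℕ) = n - 3) ∨ ((b : ℕ) = 0 ∧ (a : ℕ) = n - 3) ∨
       (∃ i, n - p ≤ i ∧ i ≤ n - 4 ∧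
         (((a : ℕ) = i ∧ (b : ℕ) = i + 1) ∨ ((b : ℕ) = i ∧ (a : ℕ) = i + 1))) ∨
       ((a : ℕ) = n - p ∧ (b : ℕ) = n - 2) ∨ ((b : ℕ) = n - p ∧ (a : ℕ) = n - 2) ∨
       ((a : ℕ) = n - 2 ∧ (b : ℕ) = n - 1) ∨ ((b : ℕ) = n - 2 ∧ (a : ℕ) = n - 1) ∨
       (∃ i, 1 ≤ i ∧ i ≤ n - p - 1 ∧
         (((a : ℕ) = i ∧ (b : ℕ) = n - p) ∨ ((b : ℕ) = i ∧ (a : ℕ) = n - p))))) :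
    G1.Connected ∧ G2.Connected ∧ G1.diam = p ∧ G2.diam = p ∧
    Nonempty
      (G1.induce {v : Fin n | n - p ≤ (v : ℕ) ∧ (v : ℕ) ≤ n - 3} ≃g
       G2.induce {v : Fin n | n - p ≤ (v : ℕ) ∧ (v : ℕ) ≤ n - 3}) :=
  stmt_16_general n p hp hpn G1 G2 hG1 hG2
end
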